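/- Suppose W ∈ ℝ^{m×n} satisfies the restricted isometry property with constant δ_r ≤ 0.1 for r = 4s, i.e., (1−δ_r)‖x‖₂² ≤ ‖W·x‖₂² ≤ (1+δ_r)‖x‖₂² for all x with at most r nonzero entries. Let Z ∈ ℝ^{n×B} be s-row-sparse, E ∈ ℝ^{n×B} arbitrary, and H = Z + E with all entries of H nonnegative. Then after t iterations of the i-SpaSP algorithm applied to (W, H) with sparsity level s, the active set S_t of size at most s satisfies ‖μ(H − H_{S_t,:})‖₂ ≤ (0.444)^t ‖μ(H)‖₂ + (14 + 7/√s)‖μ(E)‖₁. -/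

import Mathlib

/-!
Since `μ` is linear, `μ(H) = x + e` with `x = μ(Z)` supported on the at most `s` nonzero rows of
`Z` and `e = μ(E)`, and one i-SpaSP step acts on `u = μ(H)` as a CoSaMP step on the noisy
`s`-sparse signal `x`. The residual `u − u|_S` splits as `a + ε` with `a` supported on `supp x`.
By polarization, RIP of order `4s` makes `WᵀW` act as the identity up to `δ` on every set of at
most `4s` coordinates, so the `2s` largest entries of `WᵀW(a + ε)` miss at most
`2δ‖a‖₂ + 2(1 + δ)‖ε‖₁` of `a`, and pruning `u|_{Ω ∪ S}` to its `s` largest entries costs at most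
`‖e‖₂`. Hence each step contracts the residual by `2δ ≤ 0.2` up to `4(1 + δ)‖e‖₁ ≤ 4.4‖e‖₁`;
unrolling gives `0.2ᵗ‖u‖₂ + 5.5‖e‖₁`, which is below the claimed bound.
-/

open Finset Matrix

noncomputable def mu {m n : ℕ} (X : Matrix (Fin m) (Fin n) ℝ) : Fin m → ℝ :=
  fun i => ∑ j, X i j

noncomputable def l1 {n : ℕ} (v : Fin n → ℝ) : ℝ := ∑ i, |v i|

noncomputable def l2 {n : ℕ} (v : Fin n → ℝ) : ℝ := Real.sqrt (∑ i, (v i) ^ 2)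

noncomputable def frob {m n : ℕ} (X : Matrix (Fin m) (Fin n) ℝ) : ℝ :=
  Real.sqrt (∑ i, ∑ j, (X i j) ^ 2)

def vrestrict {n : ℕ} (v : Fin n → ℝ) (S : Finset (Fin n)) : Fin n → ℝ :=
  fun i => if i ∈ S then v i else 0

def rowSel {m n : ℕ} (X : Matrix (Fin m) (Fin n) ℝ) (S : Finset (Fin m)) :
    Matrix (Fin m) (Fin n) ℝ := Matrix.of fun i j => if i ∈ S then X i j else 0

def RIP {m n : ℕ} (W : Matrix (Fin m) (Fin n) ℝ) (r : ℕ) (δ : ℝ) : Prop :=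
  ∀ x : Fin n → ℝ, (Finset.univ.filter (fun i => x i ≠ 0)).card ≤ r →
    (1 - δ) * (∑ i, (x i) ^ 2) ≤ ∑ i, (W.mulVec x i) ^ 2 ∧
    ∑ i, (W.mulVec x i) ^ 2 ≤ (1 + δ) * ∑ i, (x i) ^ 2

def isTopK {n : ℕ} (k : ℕ) (v : Fin n → ℝ) (S : Finset (Fin n)) : Prop :=
  S.card = k ∧ ∀ i ∈ S, ∀ j ∉ S, |v j| ≤ |v i|

/-- One iteration of i-SpaSP: given the current active set `S`, compute the
residual `V = W·H − W·H_{S,:}`, the importance vector `y = μ(Wᵀ·V)`, take `Ω`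
the support of the `2s` largest entries of `y`, merge `Ω* = Ω ∪ S`, restrict
`b = μ(H)|_{Ω*}` and take `S'` the support of the `s` largest entries of `b`. -/
def spaspStep {m n B : ℕ} (W : Matrix (Fin m) (Fin n) ℝ)
    (H : Matrix (Fin n) (Fin B) ℝ) (s : ℕ) (S S' : Finset (Fin n)) : Prop :=
  ∃ Ω : Finset (Fin n),
    isTopK (2 * s) (mu (Wᵀ * (W * H - W * rowSel H S))) Ω ∧
    S' ⊆ Ω ∪ S ∧
    isTopK s (vrestrict (mu H) (Ω ∪ S)) S'

section Norms

variable {n : ℕ}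

lemma l2_eq_norm (v : Fin n → ℝ) : l2 v = ‖WithLp.toLp 2 v‖ := by
  simp [l2, EuclideanSpace.norm_eq]

lemma l2_nonneg (v : Fin n → ℝ) : 0 ≤ l2 v := Real.sqrt_nonneg _

lemma l1_nonneg (v : Fin n → ℝ) : 0 ≤ l1 v := sum_nonneg fun _ _ => abs_nonneg _

lemma sq_l2 (v : Fin n → ℝ) : l2 v ^ 2 = v ⬝ᵥ v := by
  rw [l2, Real.sq_sqrt (sum_nonneg fun _ _ => sq_nonneg _)]
  simp only [dotProduct, sq]

lemma l2_add_le (u v : Fin n → ℝ) : l2 (u + v) ≤ l2 u + l2 v := by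
  simpa only [l2_eq_norm, WithLp.toLp_add] using norm_add_le _ _

lemma l2_sub_le (u v : Fin n → ℝ) : l2 (u - v) ≤ l2 u + l2 v := by
  simpa only [l2_eq_norm, WithLp.toLp_sub] using norm_sub_le _ _

lemma l2_smul (c : ℝ) (v : Fin n → ℝ) : l2 (c • v) = |c| * l2 v := by
  rw [l2_eq_norm, l2_eq_norm, WithLp.toLp_smul, norm_smul, Real.norm_eq_abs]

lemma l2_sum_le {ι : Type*} (s : Finset ι) (f : ι → Fin n → ℝ) :
    l2 (∑ i ∈ s, f i) ≤ ∑ i ∈ s, l2 (f i) := by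
  simpa only [l2_eq_norm, WithLp.toLp_sum] using norm_sum_le _ _

lemma l2_le_l2_of_abs_le {u v : Fin n → ℝ} (h : ∀ i, |u i| ≤ |v i|) : l2 u ≤ l2 v :=
  Real.sqrt_le_sqrt <| sum_le_sum fun i _ => sq_le_sq.mpr (h i)

lemma l2_le_l1 (v : Fin n → ℝ) : l2 v ≤ l1 v := by
  refine Real.sqrt_le_iff.mpr ⟨l1_nonneg v, ?_⟩
  simpa only [sq_abs, l1] using sum_sq_le_sq_sum_of_nonneg (s := univ) fun i _ => abs_nonneg (v i)

lemma dotProduct_le_l2_mul_l2 (u v : Fin n → ℝ) : u ⬝ᵥ v ≤ l2 u * l2 v :=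
  Real.sum_mul_le_sqrt_mul_sqrt _ _ _

end Norms

section Restriction

variable {n : ℕ}

@[simp]
lemma vrestrict_apply (v : Fin n → ℝ) (F : Finset (Fin n)) (i : Fin n) :
    vrestrict v F i = if i ∈ F then v i else 0 := rfl

lemma vrestrict_add (u v : Fin n → ℝ) (F : Finset (Fin n)) :
    vrestrict (u + v) F = vrestrict u F + vrestrict v F := by
  ext i; by_cases hi : i ∈ F <;> simp [hi]

lemma vrestrict_sub (u v : Fin n → ℝ) (F : Finset (Fin n)) :
    vrestrict (u - v) F = vrestrict u F - vrestrict v F := by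
  ext i; by_cases hi : i ∈ F <;> simp [hi]

lemma sub_vrestrict (v : Fin n → ℝ) (F : Finset (Fin n)) : v - vrestrict v F = vrestrict v Fᶜ := by
  ext i; by_cases hi : i ∈ F <;> simp [hi]

lemma vrestrict_empty (v : Fin n → ℝ) : vrestrict v ∅ = 0 := by
  ext i; simp

lemma vrestrict_vrestrict (v : Fin n → ℝ) (F G : Finset (Fin n)) :
    vrestrict (vrestrict v F) G = vrestrict v (F ∩ G) := by
  ext i; by_cases hF : i ∈ F <;> by_cases hG : i ∈ G <;> simp [hF, hG]

lemma vrestrict_eq_of_vanishing {v : Fin n → ℝ} {T : Finset (Fin n)} (hv : ∀ i ∉ T, v i = 0)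
    (F : Finset (Fin n)) : vrestrict v F = vrestrict v (T ∩ F) := by
  ext i; by_cases hT : i ∈ T <;> by_cases hF : i ∈ F <;> simp [hT, hF, hv]

lemma vrestrict_dotProduct_self (v : Fin n → ℝ) (F : Finset (Fin n)) :
    vrestrict v F ⬝ᵥ v = vrestrict v F ⬝ᵥ vrestrict v F := by
  refine sum_congr rfl fun i _ => ?_
  by_cases hi : i ∈ F <;> simp [hi]

lemma abs_vrestrict_le (v : Fin n → ℝ) (F : Finset (Fin n)) (i : Fin n) :
    |vrestrict v F i| ≤ |v i| := by
  by_cases hi : i ∈ F <;> simp [hi]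

lemma l2_vrestrict_le (v : Fin n → ℝ) (F : Finset (Fin n)) : l2 (vrestrict v F) ≤ l2 v :=
  l2_le_l2_of_abs_le (abs_vrestrict_le v F)

lemma l1_vrestrict_le (v : Fin n → ℝ) (F : Finset (Fin n)) : l1 (vrestrict v F) ≤ l1 v :=
  sum_le_sum fun i _ => abs_vrestrict_le v F i

lemma l2_vrestrict_mono (v : Fin n → ℝ) {F G : Finset (Fin n)} (h : F ⊆ G) :
    l2 (vrestrict v F) ≤ l2 (vrestrict v G) := by
  rw [← inter_eq_right.mpr h, ← vrestrict_vrestrict]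
  exact l2_vrestrict_le _ _

lemma sq_l2_vrestrict (v : Fin n → ℝ) (F : Finset (Fin n)) :
    l2 (vrestrict v F) ^ 2 = ∑ i ∈ F, v i ^ 2 := by
  rw [l2, Real.sq_sqrt (sum_nonneg fun _ _ => sq_nonneg _)]
  simp [ite_pow, sum_ite_mem]

end Restriction

lemma le_of_sq_le_mul {x y : ℝ} (hy : 0 ≤ y) (h : x ^ 2 ≤ x * y) : x ≤ y := by
  nlinarith

lemma card_filter_ne_zero_le {n : ℕ} {v : Fin n → ℝ} {F : Finset (Fin n)}
    (hv : ∀ i ∉ F, v i = 0) : (univ.filter fun i => v i ≠ 0).card ≤ F.card :=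
  card_le_card fun i hi => by_contra fun hiF => (mem_filter.mp hi).2 (hv i hiF)

lemma dotProduct_transpose_mulVec {m n : ℕ} (W : Matrix (Fin m) (Fin n) ℝ) (w : Fin n → ℝ)
    (y : Fin m → ℝ) : w ⬝ᵥ (Wᵀ *ᵥ y) = (W *ᵥ w) ⬝ᵥ y := by
  rw [dotProduct_mulVec, vecMul_transpose]

lemma l2_single {n : ℕ} (i : Fin n) (c : ℝ) : l2 (Pi.single i c) = |c| := by
  rw [l2, sum_eq_single i (fun j _ hj => by simp [hj]) (by simp), Pi.single_eq_same,
    Real.sqrt_sq_eq_abs]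

namespace RIP

variable {m n r : ℕ} {W : Matrix (Fin m) (Fin n) ℝ} {δ : ℝ}

lemma mono {δ' : ℝ} (hrip : RIP W r δ) (h : δ ≤ δ') : RIP W r δ' := by
  intro x hx
  obtain ⟨h1, h2⟩ := hrip x hx
  have := sum_nonneg fun i (_ : i ∈ univ) => sq_nonneg (x i)
  constructor <;> nlinarith

lemma sq_l2_mulVec_le (hrip : RIP W r δ) {F : Finset (Fin n)} (hF : F.card ≤ r)
    {v : Fin n → ℝ} (hv : ∀ i ∉ F, v i = 0) : l2 (W *ᵥ v) ^ 2 ≤ (1 + δ) * l2 v ^ 2 := by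
  rw [l2, l2, Real.sq_sqrt (sum_nonneg fun _ _ => sq_nonneg _),
    Real.sq_sqrt (sum_nonneg fun _ _ => sq_nonneg _)]
  exact (hrip v ((card_filter_ne_zero_le hv).trans hF)).2

lemma le_sq_l2_mulVec (hrip : RIP W r δ) {F : Finset (Fin n)} (hF : F.card ≤ r)
    {v : Fin n → ℝ} (hv : ∀ i ∉ F, v i = 0) : (1 - δ) * l2 v ^ 2 ≤ l2 (W *ᵥ v) ^ 2 := by
  rw [l2, l2, Real.sq_sqrt (sum_nonneg fun _ _ => sq_nonneg _),
    Real.sq_sqrt (sum_nonneg fun _ _ => sq_nonneg _)]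
  exact (hrip v ((card_filter_ne_zero_le hv).trans hF)).1

lemma l2_mulVec_le (hrip : RIP W r δ) (hδ : 0 ≤ δ) {F : Finset (Fin n)} (hF : F.card ≤ r)
    {v : Fin n → ℝ} (hv : ∀ i ∉ F, v i = 0) : l2 (W *ᵥ v) ≤ √(1 + δ) * l2 v := by
  rw [← Real.sqrt_sq (l2_nonneg (W *ᵥ v)), ← Real.sqrt_sq (l2_nonneg v), ← Real.sqrt_mul (by linarith)]
  exact Real.sqrt_le_sqrt (hrip.sq_l2_mulVec_le hF hv)

lemma l2_mulVec_le_l1 (hrip : RIP W r δ) (hδ : 0 ≤ δ) (hr : 1 ≤ r) (v : Fin n → ℝ) :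
    l2 (W *ᵥ v) ≤ √(1 + δ) * l1 v := by
  have hsingle (i : Fin n) : l2 (W *ᵥ Pi.single i (v i)) ≤ √(1 + δ) * |v i| := by
    simpa only [l2_single] using hrip.l2_mulVec_le hδ (F := {i}) (v := Pi.single i (v i))
      (by simpa using hr)
      fun j hj => Pi.single_eq_of_ne (by simpa using hj) _
  calc l2 (W *ᵥ v) = l2 (∑ i, W *ᵥ Pi.single i (v i)) := by rw [← mulVec_sum, univ_sum_single]
    _ ≤ ∑ i, l2 (W *ᵥ Pi.single i (v i)) := l2_sum_le _ _
    _ ≤ ∑ i, √(1 + δ) * |v i| := sum_le_sum fun i _ => hsingle i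
    _ = √(1 + δ) * l1 v := by rw [l1, mul_sum]

lemma dotProduct_mulVec_sub_le_half (hrip : RIP W r δ) {F : Finset (Fin n)} (hF : F.card ≤ r)
    {p q : Fin n → ℝ} (hp : ∀ i ∉ F, p i = 0) (hq : ∀ i ∉ F, q i = 0) :
    (W *ᵥ p) ⬝ᵥ (W *ᵥ q) - p ⬝ᵥ q ≤ δ / 2 * (l2 p ^ 2 + l2 q ^ 2) := by
  have hadd := hrip.sq_l2_mulVec_le hF (v := p + q) fun i hi => by simp [hp i hi, hq i hi]
  have hsub := hrip.le_sq_l2_mulVec hF (v := p - q) fun i hi => by simp [hp i hi, hq i hi]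
  simp only [sq_l2, mulVec_add, mulVec_sub, add_dotProduct, dotProduct_add, sub_dotProduct,
    dotProduct_sub, dotProduct_comm q p, dotProduct_comm (W *ᵥ q)] at hadd hsub ⊢
  linarith

lemma dotProduct_mulVec_sub_le (hrip : RIP W r δ) {F : Finset (Fin n)} (hF : F.card ≤ r)
    {p q : Fin n → ℝ} (hp : ∀ i ∉ F, p i = 0) (hq : ∀ i ∉ F, q i = 0) :
    (W *ᵥ p) ⬝ᵥ (W *ᵥ q) - p ⬝ᵥ q ≤ δ * l2 p * l2 q := by
  rcases (mul_nonneg (l2_nonneg p) (l2_nonneg q)).eq_or_lt with h0 | hpos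
  · obtain hp0 | hq0 := mul_eq_zero.mp h0.symm
    · have hp' : p = 0 := dotProduct_self_eq_zero.mp (by rw [← sq_l2, hp0]; ring)
      rw [hp0]; simp [hp']
    · have hq' : q = 0 := dotProduct_self_eq_zero.mp (by rw [← sq_l2, hq0]; ring)
      rw [hq0]; simp [hq']
  -- rescaling `p` and `q` to equal lengths turns the arithmetic mean into the geometric one
  have h := hrip.dotProduct_mulVec_sub_le_half hF (p := l2 q • p) (q := l2 p • q)
    (fun i hi => by simp [hp i hi]) (fun i hi => by simp [hq i hi])
  simp only [mulVec_smul, smul_dotProduct, dotProduct_smul, l2_smul, abs_of_nonneg (l2_nonneg _),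
    smul_eq_mul] at h
  nlinarith

lemma l2_vrestrict_gram_sub_le (hrip : RIP W r δ) (hδ : 0 ≤ δ) {a : Fin n → ℝ}
    {T F : Finset (Fin n)} (ha : ∀ i ∉ T, a i = 0) (hFT : (F ∪ T).card ≤ r) :
    l2 (vrestrict (Wᵀ *ᵥ (W *ᵥ a) - a) F) ≤ δ * l2 a := by
  set w := vrestrict (Wᵀ *ᵥ (W *ᵥ a) - a) F
  have hw : ∀ i ∉ F ∪ T, w i = 0 := fun i hi => by simp [w, (not_or.mp (mem_union.not.mp hi)).1]
  have hkey : l2 w ^ 2 ≤ l2 w * (δ * l2 a) := by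
    calc l2 w ^ 2 = (W *ᵥ w) ⬝ᵥ (W *ᵥ a) - w ⬝ᵥ a := by
          rw [sq_l2, ← vrestrict_dotProduct_self, dotProduct_sub, dotProduct_transpose_mulVec]
      _ ≤ δ * l2 w * l2 a :=
          hrip.dotProduct_mulVec_sub_le hFT hw fun i hi => ha i (not_or.mp (mem_union.not.mp hi)).2
      _ = l2 w * (δ * l2 a) := by ring
  exact le_of_sq_le_mul (mul_nonneg hδ (l2_nonneg a)) hkey

lemma l2_vrestrict_gram_le (hrip : RIP W r δ) (hδ : 0 ≤ δ) (hr : 1 ≤ r) {F : Finset (Fin n)}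
    (hF : F.card ≤ r) (ε : Fin n → ℝ) :
    l2 (vrestrict (Wᵀ *ᵥ (W *ᵥ ε)) F) ≤ (1 + δ) * l1 ε := by
  set w := vrestrict (Wᵀ *ᵥ (W *ᵥ ε)) F
  have hkey : l2 w ^ 2 ≤ l2 w * ((1 + δ) * l1 ε) := by
    calc l2 w ^ 2 = (W *ᵥ w) ⬝ᵥ (W *ᵥ ε) := by
          rw [sq_l2, ← vrestrict_dotProduct_self, dotProduct_transpose_mulVec]
      _ ≤ l2 (W *ᵥ w) * l2 (W *ᵥ ε) := dotProduct_le_l2_mul_l2 _ _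
      _ ≤ (√(1 + δ) * l2 w) * (√(1 + δ) * l1 ε) :=
          mul_le_mul (hrip.l2_mulVec_le hδ hF fun i hi => by simp [w, hi])
            (hrip.l2_mulVec_le_l1 hδ hr ε) (l2_nonneg _)
            (mul_nonneg (Real.sqrt_nonneg _) (l2_nonneg _))
      _ = l2 w * ((1 + δ) * l1 ε) := by
          rw [mul_mul_mul_comm, Real.mul_self_sqrt (by linarith)]; ring
  exact le_of_sq_le_mul (mul_nonneg (by linarith) (l1_nonneg ε)) hkey

lemma l2_vrestrict_gram_add_sub_le (hrip : RIP W r δ) (hδ : 0 ≤ δ) (hr : 1 ≤ r)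
    {a : Fin n → ℝ} {T F : Finset (Fin n)} (ha : ∀ i ∉ T, a i = 0) (hFT : (F ∪ T).card ≤ r)
    (ε : Fin n → ℝ) :
    l2 (vrestrict (Wᵀ *ᵥ (W *ᵥ (a + ε)) - a) F) ≤ δ * l2 a + (1 + δ) * l1 ε := by
  have hsplit : vrestrict (Wᵀ *ᵥ (W *ᵥ (a + ε)) - a) F
      = vrestrict (Wᵀ *ᵥ (W *ᵥ a) - a) F + vrestrict (Wᵀ *ᵥ (W *ᵥ ε)) F := by
    rw [← vrestrict_add, mulVec_add, mulVec_add, add_sub_right_comm]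
  rw [hsplit]
  exact (l2_add_le _ _).trans (add_le_add (hrip.l2_vrestrict_gram_sub_le hδ ha hFT)
    (hrip.l2_vrestrict_gram_le hδ hr ((card_le_card subset_union_left).trans hFT) ε))

end RIP

lemma sum_le_sum_of_card_le_of_forall_le {ι : Type*} {f : ι → ℝ} {A B : Finset ι}
    (hcard : A.card ≤ B.card) (hB : ∀ b ∈ B, 0 ≤ f b) (h : ∀ a ∈ A, ∀ b ∈ B, f a ≤ f b) :
    ∑ i ∈ A, f i ≤ ∑ i ∈ B, f i := by
  rcases B.eq_empty_or_nonempty with rfl | hBne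
  · simp [card_eq_zero.mp (Nat.le_zero.mp hcard)]
  obtain ⟨b₀, hb₀, hmin⟩ := B.exists_min_image f hBne
  calc ∑ i ∈ A, f i ≤ A.card • f b₀ := sum_le_card_nsmul _ _ _ fun a ha => h a ha b₀ hb₀
    _ ≤ B.card • f b₀ := nsmul_le_nsmul_left (hB b₀ hb₀) hcard
    _ ≤ ∑ i ∈ B, f i := card_nsmul_le_sum _ _ _ hmin

namespace isTopK

variable {n k : ℕ} {v : Fin n → ℝ} {S A : Finset (Fin n)}

lemma sum_sq_sdiff_le (h : isTopK k v S) (hA : A.card ≤ k) :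
    ∑ i ∈ A \ S, v i ^ 2 ≤ ∑ i ∈ S \ A, v i ^ 2 := by
  have hcard : (A \ S).card ≤ (S \ A).card := by
    have hA' := card_sdiff_add_card_inter A S
    have hS' := card_sdiff_add_card_inter S A
    rw [inter_comm] at hS'
    have := h.1
    omega
  exact sum_le_sum_of_card_le_of_forall_le hcard (fun _ _ => sq_nonneg _) fun a ha b hb =>
    sq_le_sq.mpr (h.2 b (mem_sdiff.mp hb).1 a (mem_sdiff.mp ha).2)

lemma l2_vrestrict_sdiff_le (h : isTopK k v S) (hA : A.card ≤ k) :
    l2 (vrestrict v (A \ S)) ≤ l2 (vrestrict v (S \ A)) := by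
  rw [← pow_le_pow_iff_left₀ (l2_nonneg _) (l2_nonneg _) two_ne_zero, sq_l2_vrestrict,
    sq_l2_vrestrict]
  exact h.sum_sq_sdiff_le hA

lemma l2_sub_vrestrict_le (h : isTopK k v S) (hA : A.card ≤ k) :
    l2 (v - vrestrict v S) ≤ l2 (v - vrestrict v A) := by
  have hsum : ∑ i ∈ A, v i ^ 2 ≤ ∑ i ∈ S, v i ^ 2 := by
    rw [← sum_inter_add_sum_sdiff A S, ← sum_inter_add_sum_sdiff S A, inter_comm]
    exact add_le_add_right (h.sum_sq_sdiff_le hA) _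
  rw [← pow_le_pow_iff_left₀ (l2_nonneg _) (l2_nonneg _) two_ne_zero, sub_vrestrict,
    sub_vrestrict, sq_l2_vrestrict, sq_l2_vrestrict]
  linarith [sum_compl_add_sum S fun i => v i ^ 2, sum_compl_add_sum A fun i => v i ^ 2]

end isTopK

section Step

variable {m n s : ℕ} {W : Matrix (Fin m) (Fin n) ℝ} {δ : ℝ}

lemma RIP.l2_vrestrict_compl_le_of_isTopK (hrip : RIP W (4 * s) δ) (hδ : 0 ≤ δ) (hs : 1 ≤ s)
    {a : Fin n → ℝ} {T Ω : Finset (Fin n)} (ha : ∀ i ∉ T, a i = 0) (hT : T.card ≤ s)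
    (ε : Fin n → ℝ) (hΩ : isTopK (2 * s) (Wᵀ *ᵥ (W *ᵥ (a + ε))) Ω) :
    l2 (vrestrict a Ωᶜ) ≤ 2 * δ * l2 a + 2 * (1 + δ) * l1 ε := by
  set y := Wᵀ *ᵥ (W *ᵥ (a + ε))
  have hgram (F : Finset (Fin n)) (hF : F.card ≤ 3 * s) :
      l2 (vrestrict (y - a) F) ≤ δ * l2 a + (1 + δ) * l1 ε :=
    hrip.l2_vrestrict_gram_add_sub_le hδ (by omega) ha ((card_union_le F T).trans (by omega)) ε
  have hTΩ : (T \ Ω).card ≤ 3 * s := (card_le_card sdiff_subset).trans (by omega)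
  have hΩT : (Ω \ T).card ≤ 3 * s := (card_le_card sdiff_subset).trans (by rw [hΩ.1]; omega)
  have ha_out : vrestrict a (Ω \ T) = 0 := by
    ext i; by_cases hi : i ∈ T <;> simp [hi, ha]
  calc l2 (vrestrict a Ωᶜ) = l2 (vrestrict y (T \ Ω) - vrestrict (y - a) (T \ Ω)) := by
        rw [vrestrict_sub, sub_sub_cancel, vrestrict_eq_of_vanishing ha, sdiff_eq_inter_compl]
    _ ≤ l2 (vrestrict y (T \ Ω)) + l2 (vrestrict (y - a) (T \ Ω)) := l2_sub_le _ _
    _ ≤ l2 (vrestrict y (Ω \ T)) + l2 (vrestrict (y - a) (T \ Ω)) :=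
        add_le_add_left (hΩ.l2_vrestrict_sdiff_le (by omega)) _
    _ = l2 (vrestrict (y - a) (Ω \ T)) + l2 (vrestrict (y - a) (T \ Ω)) := by
        rw [vrestrict_sub y a (Ω \ T), ha_out, sub_zero]
    _ ≤ 2 * δ * l2 a + 2 * (1 + δ) * l1 ε := by linarith [hgram _ hΩT, hgram _ hTΩ]

lemma l2_vrestrict_sub_vrestrict_le_of_isTopK {x e : Fin n → ℝ} {T G S' : Finset (Fin n)}
    (hx : ∀ i ∉ T, x i = 0) (hT : T.card ≤ s) (hS' : S' ⊆ G)
    (htop : isTopK s (vrestrict (x + e) G) S') :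
    l2 (vrestrict (x + e) G - vrestrict (x + e) S') ≤ l2 e := by
  set b := vrestrict (x + e) G
  have hb : vrestrict b S' = vrestrict (x + e) S' := by
    rw [vrestrict_vrestrict, inter_eq_right.mpr hS']
  rw [← hb]
  refine (htop.l2_sub_vrestrict_le hT).trans (l2_le_l2_of_abs_le fun i => ?_)
  by_cases hG : i ∈ G <;> by_cases hTi : i ∈ T <;> simp [b, hG, hTi, hx]

lemma RIP.l2_sub_vrestrict_le_of_spaspStep (hrip : RIP W (4 * s) δ) (hδ : 0 ≤ δ) (hs : 1 ≤ s)
    {x e : Fin n → ℝ} {T S Ω S' : Finset (Fin n)} (hx : ∀ i ∉ T, x i = 0) (hT : T.card ≤ s)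
    (hΩ : isTopK (2 * s) (Wᵀ *ᵥ (W *ᵥ (x + e - vrestrict (x + e) S))) Ω) (hS' : S' ⊆ Ω ∪ S)
    (htop : isTopK s (vrestrict (x + e) (Ω ∪ S)) S') :
    l2 (x + e - vrestrict (x + e) S')
      ≤ 2 * δ * l2 (x + e - vrestrict (x + e) S) + 4 * (1 + δ) * l1 e := by
  set u := x + e
  set G := Ω ∪ S
  set a := vrestrict x Sᶜ
  set ε := vrestrict e Sᶜ
  have hv : u - vrestrict u S = a + ε := by rw [sub_vrestrict, vrestrict_add]
  have ha : ∀ i ∉ T, a i = 0 := fun i hi => by simp [a, hx i hi]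
  have hident := hrip.l2_vrestrict_compl_le_of_isTopK hδ hs ha hT ε (by rwa [← hv])
  have hprune := l2_vrestrict_sub_vrestrict_le_of_isTopK hx hT hS' htop
  have houter : u - vrestrict u G = vrestrict a Gᶜ + vrestrict ε Gᶜ := by
    rw [← vrestrict_add, ← hv, sub_vrestrict, sub_vrestrict, vrestrict_vrestrict,
      inter_eq_right.mpr (compl_subset_compl.mpr subset_union_right)]
  have hε : l2 ε ≤ l1 e := (l2_le_l1 ε).trans (l1_vrestrict_le e _)
  have ha_le : l2 a ≤ l2 (u - vrestrict u S) + l1 e := by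
    rw [hv]
    calc l2 a = l2 (a + ε - ε) := by rw [add_sub_cancel_right]
      _ ≤ l2 (a + ε) + l1 e := by linarith [l2_sub_le (a + ε) ε]
  have hδa := mul_le_mul_of_nonneg_left ha_le hδ
  have hδε := mul_le_mul_of_nonneg_left (l1_vrestrict_le e Sᶜ) (by linarith : 0 ≤ 1 + δ)
  calc l2 (u - vrestrict u S') = l2 ((u - vrestrict u G) + (vrestrict u G - vrestrict u S')) := by
        rw [sub_add_sub_cancel]
    _ ≤ l2 (vrestrict a Gᶜ) + l2 (vrestrict ε Gᶜ) + l2 e := by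
        rw [houter]
        linarith [l2_add_le (vrestrict a Gᶜ + vrestrict ε Gᶜ) (vrestrict u G - vrestrict u S'),
          l2_add_le (vrestrict a Gᶜ) (vrestrict ε Gᶜ)]
    _ ≤ l2 (vrestrict a Ωᶜ) + l2 ε + l1 e := by
        gcongr
        · exact l2_vrestrict_mono a (compl_subset_compl.mpr subset_union_left)
        · exact l2_vrestrict_le ε _
        · exact l2_le_l1 e
    _ ≤ 2 * δ * l2 (u - vrestrict u S) + 4 * (1 + δ) * l1 e := by linarith

end Step

lemma le_pow_mul_add_of_le_mul_add {r : ℕ → ℝ} {ρ c K : ℝ} (hρ : 0 ≤ ρ) (hK : 0 ≤ K)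
    (hc : ρ * K + c ≤ K) (h : ∀ t, r (t + 1) ≤ ρ * r t + c) (t : ℕ) :
    r t ≤ ρ ^ t * r 0 + K := by
  induction t with
  | zero => simpa using hK
  | succ t ih =>
    calc r (t + 1) ≤ ρ * r t + c := h t
      _ ≤ ρ * (ρ ^ t * r 0 + K) + c := by gcongr
      _ = ρ ^ (t + 1) * r 0 + (ρ * K + c) := by ring
      _ ≤ ρ ^ (t + 1) * r 0 + K := by linarith

section ColumnSums

variable {m n B : ℕ}

lemma mu_eq_mulVec (X : Matrix (Fin m) (Fin n) ℝ) : mu X = X *ᵥ 1 := by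
  ext i; simp [mu, mulVec, dotProduct]

lemma mu_add (X Y : Matrix (Fin m) (Fin n) ℝ) : mu (X + Y) = mu X + mu Y := by
  simp only [mu_eq_mulVec, add_mulVec]

lemma mu_sub (X Y : Matrix (Fin m) (Fin n) ℝ) : mu (X - Y) = mu X - mu Y := by
  simp only [mu_eq_mulVec, sub_mulVec]

lemma mu_mul (A : Matrix (Fin m) (Fin n) ℝ) (X : Matrix (Fin n) (Fin B) ℝ) :
    mu (A * X) = A *ᵥ mu X := by
  rw [mu_eq_mulVec, mu_eq_mulVec, mulVec_mulVec]

lemma mu_sub_rowSel (X : Matrix (Fin m) (Fin n) ℝ) (S : Finset (Fin m)) :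
    mu (X - rowSel X S) = mu X - vrestrict (mu X) S := by
  rw [mu_sub]
  congr 1
  ext i; by_cases hi : i ∈ S <;> simp [mu, rowSel, hi]

lemma mu_apply_eq_zero {X : Matrix (Fin m) (Fin n) ℝ} {i : Fin m} (h : ∀ j, X i j = 0) :
    mu X i = 0 :=
  sum_eq_zero fun j _ => h j

end ColumnSums

lemma RIP.l2_mu_sub_rowSel_le_of_spaspStep {m n B s : ℕ} {W : Matrix (Fin m) (Fin n) ℝ} {δ : ℝ}
    (hrip : RIP W (4 * s) δ) (hδ : 0 ≤ δ) (hs : 1 ≤ s) {Z E H : Matrix (Fin n) (Fin B) ℝ}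
    {T : Finset (Fin n)} (hZ : ∀ i ∉ T, ∀ j, Z i j = 0) (hT : T.card ≤ s) (hH : H = Z + E)
    {S S' : Finset (Fin n)} (hstep : spaspStep W H s S S') :
    l2 (mu (H - rowSel H S'))
      ≤ 2 * δ * l2 (mu (H - rowSel H S)) + 4 * (1 + δ) * l1 (mu E) := by
  obtain ⟨Ω, hΩ, hS', htop⟩ := hstep
  have hmuH : mu H = mu Z + mu E := by rw [hH, mu_add]
  rw [mu_mul, ← Matrix.mul_sub, mu_mul, mu_sub_rowSel, hmuH] at hΩ
  rw [hmuH] at htop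
  rw [mu_sub_rowSel, mu_sub_rowSel, hmuH]
  exact hrip.l2_sub_vrestrict_le_of_spaspStep hδ hs (fun i hi => mu_apply_eq_zero (hZ i hi)) hT
    hΩ hS' htop

open Classical in
theorem ispasp_hidden_residual_general {m n B s : ℕ} (hs : 1 ≤ s)
    (W : Matrix (Fin m) (Fin n) ℝ) (Z E H : Matrix (Fin n) (Fin B) ℝ) (δ : ℝ)
    (hδ : δ ≤ 0.1) (hrip : RIP W (4 * s) δ)
    (hZ : (Finset.univ.filter (fun i => ∃ j, Z i j ≠ 0)).card ≤ s)
    (hH : H = Z + E)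
    (S : ℕ → Finset (Fin n)) (h0 : S 0 = ∅)
    (hstep : ∀ t, spaspStep W H s (S t) (S (t + 1))) (t : ℕ) :
    (S t).card ≤ s ∧
    l2 (mu (H - rowSel H (S t)))
      ≤ (0.444 : ℝ) ^ t * l2 (mu H) + (14 + 7 / Real.sqrt s) * l1 (mu E) := by
  have hZ_rows : ∀ i ∉ univ.filter (fun i => ∃ j, Z i j ≠ 0), ∀ j, Z i j = 0 :=
    fun i hi j => by_contra fun hj => hi (mem_filter.mpr ⟨mem_univ i, j, hj⟩)
  have hcard : ∀ t, (S t).card ≤ s := by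
    rintro (_ | t)
    · simp [h0]
    · obtain ⟨Ω, -, -, htop⟩ := hstep t
      exact htop.1.le
  have hδ₀ : max δ 0 ≤ 0.1 := max_le hδ (by norm_num)
  have hrec (t : ℕ) : l2 (mu (H - rowSel H (S (t + 1))))
      ≤ 0.2 * l2 (mu (H - rowSel H (S t))) + 4.4 * l1 (mu E) := by
    have := (hrip.mono (le_max_left δ 0)).l2_mu_sub_rowSel_le_of_spaspStep (le_max_right δ 0) hs
      hZ_rows hZ hH (hstep t)
    nlinarith [l2_nonneg (mu (H - rowSel H (S t))), l1_nonneg (mu E)]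
  have hgeom := le_pow_mul_add_of_le_mul_add (r := fun t => l2 (mu (H - rowSel H (S t))))
    (K := 5.5 * l1 (mu E)) (by norm_num) (mul_nonneg (by norm_num) (l1_nonneg (mu E)))
    (by linarith) hrec t
  rw [h0, mu_sub_rowSel H ∅, vrestrict_empty, sub_zero] at hgeom
  refine ⟨hcard t, hgeom.trans (add_le_add ?_ ?_)⟩
  · exact mul_le_mul_of_nonneg_right (pow_le_pow_left₀ (by norm_num) (by norm_num) t) (l2_nonneg _)
  · have h7 : 0 ≤ 7 / √(s : ℝ) := by positivity
    exact mul_le_mul_of_nonneg_right (by linarith) (l1_nonneg _)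

open Classical in
theorem ispasp_hidden_residual {m n B s : ℕ} (hs : 1 ≤ s)
    (W : Matrix (Fin m) (Fin n) ℝ) (Z E H : Matrix (Fin n) (Fin B) ℝ) (δ : ℝ)
    (hδ : δ ≤ 0.1) (hrip : RIP W (4 * s) δ)
    (hZ : (Finset.univ.filter (fun i => ∃ j, Z i j ≠ 0)).card ≤ s)
    (hH : H = Z + E) (hpos : ∀ i j, 0 ≤ H i j)
    (S : ℕ → Finset (Fin n)) (h0 : S 0 = ∅)
    (hstep : ∀ t, spaspStep W H s (S t) (S (t + 1))) (t : ℕ) :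
    (S t).card ≤ s ∧
    l2 (mu (H - rowSel H (S t)))
      ≤ (0.444 : ℝ) ^ t * l2 (mu H) + (14 + 7 / Real.sqrt s) * l1 (mu E) :=
  ispasp_hidden_residual_general hs W Z E H δ hδ hrip hZ hH S h0 hstep t
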